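/- Let p, d ∈ ℕ and m_ξ > 0. Let G ∈ ℝ^{pd×pd} be symmetric with smallest eigenvalue Λ_min(G) ≥ 2πm_ξ, let g ∈ ℝ^{pd×p}, and set β := G^{−1}g. Let Ĝ ∈ ℝ^{pd×pd} be symmetric positive semi-definite and ĝ ∈ ℝ^{pd×p} satisfy |Ĝ − G|_∞ ≤ δ and |ĝ − g|_∞ ≤ δ for some δ > 0. Let s_{0,j} := |{i : β_{ij} ≠ 0}|, s_in := max_{1≤j≤p} s_{0,j}, and assume s_in δ ≤ πm_ξ/16. Let λ ≥ 4(‖β‖_1 + 1)δ and let β̂ be any global minimizer over M ∈ ℝ^{pd×p} of tr(M^⊤ĜM − 2M^⊤ĝ) + λ|M|_1. Then max_{1≤j≤p} |β̂_{·j} − β_{·j}|_2 ≤ 6√(s_in) λ/(πm_ξ), max_{1≤j≤p} |β̂_{·j} − β_{·j}|_1 ≤ 24 s_in λ/(πm_ξ), and max_{1≤j≤p} |β̂_{·j} − β_{·j}|_∞ ≤ min(4‖G^{−1}‖_1 λ, 6√(s_in) λ/(πm_ξ)). -/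

import Mathlib

open Matrix
open scoped Classical

/-- Maximum absolute column-sum norm `‖M‖₁ = max_j ∑_i |M i j|`. -/
noncomputable def colOneNorm {a b : ℕ} (M : Matrix (Fin a) (Fin b) ℝ) : ℝ :=
  ⨆ j : Fin b, ∑ i, |M i j|

/-- Maximum number of nonzero entries in a column, `s_in = max_j |{i : β i j ≠ 0}|`. -/
noncomputable def maxColSupport {a b : ℕ} (β : Matrix (Fin a) (Fin b) ℝ) : ℕ :=
  Finset.univ.sup fun j : Fin b => (Finset.univ.filter fun i : Fin a => β i j ≠ 0).card

/-!
Each column of a minimiser of the matrix objective minimises its own column Lasso objective, so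
the bounds come from the standard deterministic Lasso analysis, one column at a time. Write
`ν = β̂_j - β_j` and let `S` be the support of `β_j`. The noise `ĝ_j - Ĝ β_j` has sup norm at most
`(|β_j|₁ + 1) δ ≤ λ / 4`, so comparing the objective at `β̂_j` and at `β_j` gives
`νᵀ Ĝ ν ≤ λ (3/2 |ν_S|₁ - 1/2 |ν_Sᶜ|₁)`, hence the cone condition `|ν_Sᶜ|₁ ≤ 3 |ν_S|₁`. On this cone
`|ν|₁² ≤ 16 s |ν|₂²`, so replacing `G` by `Ĝ` costs at most `δ |ν|₁² ≤ π m_ξ |ν|₂²` of the curvature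
`2 π m_ξ`, and `π m_ξ |ν|₂² ≤ 3/2 λ |ν_S|₁ ≤ 3/2 λ √s |ν|₂` yields the `ℓ₂` bound, then the `ℓ₁` one.
For the `ℓ∞` bound, perturbing a single coordinate of the minimiser shows `|Ĝ β̂_j - ĝ_j|_∞ ≤ λ / 2`;
together with the noise and the `ℓ₁` bound this gives `|G ν|_∞ ≤ 2 λ`, and `ν = G⁻¹ (G ν)`.
-/

open Finset

section Vectors

variable {m n : Type*} [Fintype n]

theorem abs_dotProduct_le_of_abs_le {x y : n → ℝ} {r : ℝ} (hy : ∀ i, |y i| ≤ r) :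
    |x ⬝ᵥ y| ≤ (∑ i, |x i|) * r :=
  calc |x ⬝ᵥ y| ≤ ∑ i, |x i| * |y i| := by
        simpa only [dotProduct, abs_mul] using abs_sum_le_sum_abs (fun i => x i * y i) univ
    _ ≤ ∑ i, |x i| * r := by gcongr with i; exact hy i
    _ = (∑ i, |x i|) * r := (sum_mul ..).symm

theorem abs_mulVec_apply_le {A : Matrix m n ℝ} {δ : ℝ} (hA : ∀ i k, |A i k| ≤ δ) (x : n → ℝ)
    (i : m) : |(A *ᵥ x) i| ≤ (∑ k, |x k|) * δ := by
  rw [mulVec, dotProduct_comm]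
  exact abs_dotProduct_le_of_abs_le (hA i)

theorem abs_dotProduct_mulVec_le {A : Matrix n n ℝ} {δ : ℝ} (hA : ∀ i k, |A i k| ≤ δ)
    (x : n → ℝ) : |x ⬝ᵥ (A *ᵥ x)| ≤ (∑ k, |x k|) ^ 2 * δ :=
  (abs_dotProduct_le_of_abs_le (abs_mulVec_apply_le hA x)).trans_eq (by ring)

theorem abs_apply_le_sqrt_sum_sq (x : n → ℝ) (i : n) : |x i| ≤ √(∑ k, x k ^ 2) := by
  rw [← Real.sqrt_sq_eq_abs]
  exact Real.sqrt_le_sqrt (single_le_sum (fun k _ => sq_nonneg (x k)) (mem_univ i))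

theorem sum_abs_le_sqrt_card_mul_sqrt_sum_sq (s : Finset n) (x : n → ℝ) :
    ∑ i ∈ s, |x i| ≤ √(#s : ℝ) * √(∑ i, x i ^ 2) := by
  rw [← Real.sqrt_mul (Nat.cast_nonneg _)]
  refine Real.le_sqrt_of_sq_le ?_
  calc (∑ i ∈ s, |x i|) ^ 2 ≤ #s * ∑ i ∈ s, |x i| ^ 2 := sq_sum_le_card_mul_sum_sq
    _ ≤ #s * ∑ i, x i ^ 2 := by
        simp only [sq_abs]
        exact mul_le_mul_of_nonneg_left (sum_le_univ_sum_of_nonneg fun i => sq_nonneg (x i))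
          (Nat.cast_nonneg _)

theorem sum_abs_le_of_cone [DecidableEq n] {s : Finset n} {x : n → ℝ}
    (hx : ∑ i ∈ sᶜ, |x i| ≤ 3 * ∑ i ∈ s, |x i|) :
    ∑ i, |x i| ≤ 4 * (√(#s : ℝ) * √(∑ i, x i ^ 2)) := by
  rw [← sum_add_sum_compl s]
  linarith [sum_abs_le_sqrt_card_mul_sqrt_sum_sq s x]

theorem sum_abs_sub_sum_abs_le [DecidableEq n] {s : Finset n} {u : n → ℝ}
    (hu : ∀ i ∉ s, u i = 0) (v : n → ℝ) :
    ∑ i, |u i| - ∑ i, |v i| ≤ ∑ i ∈ s, |(v - u) i| - ∑ i ∈ sᶜ, |(v - u) i| := by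
  simp only [Pi.sub_apply]
  rw [← sum_add_sum_compl s fun i => |u i|, ← sum_add_sum_compl s fun i => |v i|]
  have hu_compl : ∑ i ∈ sᶜ, |u i| = 0 :=
    sum_eq_zero fun i hi => by rw [hu i (mem_compl.1 hi), abs_zero]
  have hv_compl : ∑ i ∈ sᶜ, |v i - u i| = ∑ i ∈ sᶜ, |v i| :=
    sum_congr rfl fun i hi => by rw [hu i (mem_compl.1 hi), sub_zero]
  have hs : ∑ i ∈ s, |u i| - ∑ i ∈ s, |v i| ≤ ∑ i ∈ s, |v i - u i| := by
    rw [← sum_sub_distrib]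
    gcongr with i
    rw [abs_sub_comm]
    exact abs_sub_abs_le_abs_sub _ _
  linarith

end Vectors

section SymmetricMatrices

variable {n : Type*} [Fintype n]

theorem Matrix.IsSymm.dotProduct_mulVec_comm {A : Matrix n n ℝ} (hA : A.IsSymm)
    (x y : n → ℝ) : x ⬝ᵥ (A *ᵥ y) = y ⬝ᵥ (A *ᵥ x) := by
  rw [dotProduct_mulVec, ← mulVec_transpose, hA.eq, dotProduct_comm]

variable [DecidableEq n]

theorem Matrix.IsHermitian.posSemidef_sub_smul_one {A : Matrix n n ℝ} (hA : A.IsHermitian)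
    {c : ℝ} (hc : ∀ i, c ≤ hA.eigenvalues i) : (A - c • 1).PosSemidef := by
  have hdiag : (diagonal (RCLike.ofReal ∘ hA.eigenvalues) - c • 1 : Matrix n n ℝ).PosSemidef := by
    rw [smul_one_eq_diagonal, diagonal_sub]
    exact posSemidef_diagonal_iff.mpr fun i => sub_nonneg.mpr (hc i)
  conv => enter [1, 1]; rw [hA.spectral_theorem]
  rw [← map_one (Unitary.conjStarAlgAut ℝ _ hA.eigenvectorUnitary), ← map_smul, ← map_sub]
  simpa [star_eq_conjTranspose] using
    hdiag.mul_mul_conjTranspose_same (hA.eigenvectorUnitary : Matrix n n ℝ)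

theorem Matrix.IsHermitian.mul_sum_sq_le_dotProduct_mulVec {A : Matrix n n ℝ}
    (hA : A.IsHermitian) {c : ℝ} (hc : ∀ i, c ≤ hA.eigenvalues i) (x : n → ℝ) :
    c * ∑ i, x i ^ 2 ≤ x ⬝ᵥ (A *ᵥ x) := by
  have h := (hA.posSemidef_sub_smul_one hc).dotProduct_mulVec_nonneg x
  simp only [star_trivial, sub_mulVec, smul_mulVec, one_mulVec, dotProduct_sub,
    dotProduct_smul, smul_eq_mul] at h
  have hx : x ⬝ᵥ x = ∑ i, x i ^ 2 := by simp only [dotProduct, sq]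
  rw [hx] at h
  linarith

end SymmetricMatrices

theorem sqrt_le_div_of_mul_le_mul_sqrt {c K T : ℝ} (hc : 0 < c) (hK : 0 ≤ K) (hT : 0 ≤ T)
    (h : c * T ≤ K * √T) : √T ≤ K / c := by
  rw [le_div_iff₀ hc]
  rcases (Real.sqrt_nonneg T).eq_or_lt with h0 | hpos
  · rwa [← h0, zero_mul]
  · refine le_of_mul_le_mul_right ?_ hpos
    nlinarith [Real.mul_self_sqrt hT]

theorem two_mul_abs_le_of_forall_nonneg {a r lam : ℝ}
    (h : ∀ t, 0 ≤ a * t ^ 2 + 2 * t * r + lam * |t|) : 2 * |r| ≤ lam := by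
  by_contra! hlt
  -- test `t = ∓τ` against the sign of `r`, with `τ` so small that `a τ²` cannot compensate
  set τ := (2 * |r| - lam) / (|a| + 1) with hτ_def
  have hτ : 0 < τ := div_pos (sub_pos.2 hlt) (by positivity)
  obtain ⟨t, ht_sq, ht_mul, ht_abs⟩ : ∃ t, t ^ 2 = τ ^ 2 ∧ t * r = -(τ * |r|) ∧ |t| = τ := by
    rcases le_or_gt 0 r with hr | hr
    · exact ⟨-τ, by ring, by rw [abs_of_nonneg hr]; ring, by rw [abs_neg, abs_of_pos hτ]⟩
    · exact ⟨τ, rfl, by rw [abs_of_neg hr]; ring, abs_of_pos hτ⟩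
  have hτ_mul : 0 ≤ τ * (a * τ - 2 * |r| + lam) := by
    have := h t
    rw [ht_sq, mul_assoc, ht_mul, ht_abs] at this
    linarith
  have hτ_le : 2 * |r| - lam ≤ a * τ := by linarith [nonneg_of_mul_nonneg_right hτ_mul hτ]
  have hτ_eq : (|a| + 1) * τ = 2 * |r| - lam := by rw [hτ_def]; field_simp
  nlinarith [le_abs_self a]

section Lasso

variable {n : Type*} [Fintype n]

noncomputable def lassoObjective (Ghat : Matrix n n ℝ) (ghat : n → ℝ) (lam : ℝ) (w : n → ℝ) :
    ℝ :=
  w ⬝ᵥ (Ghat *ᵥ w) - 2 * (w ⬝ᵥ ghat) + lam * ∑ i, |w i|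

theorem lassoObjective_sub_lassoObjective {Ghat : Matrix n n ℝ} (hGhat : Ghat.IsSymm)
    (ghat : n → ℝ) (lam : ℝ) (u v : n → ℝ) :
    lassoObjective Ghat ghat lam v - lassoObjective Ghat ghat lam u =
      (v - u) ⬝ᵥ (Ghat *ᵥ (v - u)) - 2 * ((v - u) ⬝ᵥ (ghat - Ghat *ᵥ u)) +
        lam * (∑ i, |v i| - ∑ i, |u i|) := by
  simp only [lassoObjective, mulVec_sub, sub_dotProduct, dotProduct_sub,
    hGhat.dotProduct_mulVec_comm u v]
  ring

theorem lassoObjective_add_single [DecidableEq n] {Ghat : Matrix n n ℝ} (hGhat : Ghat.IsSymm)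
    (ghat : n → ℝ) (lam : ℝ) (v : n → ℝ) (i : n) (t : ℝ) :
    lassoObjective Ghat ghat lam (v + Pi.single i t) =
      lassoObjective Ghat ghat lam v + Ghat i i * t ^ 2 + 2 * t * ((Ghat *ᵥ v) i - ghat i) +
        lam * (|v i + t| - |v i|) := by
  have habs : ∑ k, |(v + Pi.single i t : n → ℝ) k| = ∑ k, |v k| + (|v i + t| - |v i|) := by
    rw [← sub_eq_iff_eq_add', ← sum_sub_distrib, sum_eq_single i (fun k _ hk => by simp [hk])
      (fun h => absurd (mem_univ i) h)]
    simp
  have hdiag : (Ghat *ᵥ Pi.single i t) i = Ghat i i * t := dotProduct_single _ _ _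
  simp only [lassoObjective, habs, mulVec_add, dotProduct_add, add_dotProduct,
    hGhat.dotProduct_mulVec_comm v (Pi.single i t), single_dotProduct, hdiag]
  ring

theorem two_mul_abs_mulVec_sub_le_of_isMin [DecidableEq n] {Ghat : Matrix n n ℝ}
    (hGhat : Ghat.IsSymm) {ghat v : n → ℝ} {lam : ℝ} (hlam : 0 ≤ lam)
    (hv : ∀ w, lassoObjective Ghat ghat lam v ≤ lassoObjective Ghat ghat lam w) (i : n) :
    2 * |(Ghat *ᵥ v) i - ghat i| ≤ lam :=
  two_mul_abs_le_of_forall_nonneg (a := Ghat i i) fun t => by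
    have hmin := hv (v + Pi.single i t)
    rw [lassoObjective_add_single hGhat] at hmin
    have hstep : |v i + t| - |v i| ≤ |t| := by linarith [abs_add_le (v i) t]
    nlinarith [mul_le_mul_of_nonneg_left hstep hlam]

theorem lasso_basic_inequality [DecidableEq n] {Ghat : Matrix n n ℝ} (hGhat : Ghat.IsSymm)
    {ghat u v : n → ℝ} {lam : ℝ} {s : Finset n} (hlam : 0 ≤ lam)
    (hnoise : ∀ i, |ghat i - (Ghat *ᵥ u) i| ≤ lam / 4) (hu : ∀ i ∉ s, u i = 0)
    (hv : lassoObjective Ghat ghat lam v ≤ lassoObjective Ghat ghat lam u) :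
    (v - u) ⬝ᵥ (Ghat *ᵥ (v - u)) ≤
      lam * (3 / 2 * ∑ i ∈ s, |(v - u) i| - 1 / 2 * ∑ i ∈ sᶜ, |(v - u) i|) := by
  have hsub := lassoObjective_sub_lassoObjective hGhat ghat lam u v
  have hcross := abs_dotProduct_le_of_abs_le (x := v - u) (y := ghat - Ghat *ᵥ u) hnoise
  have hsplit : ∑ i, |(v - u) i| = ∑ i ∈ s, |(v - u) i| + ∑ i ∈ sᶜ, |(v - u) i| :=
    (sum_add_sum_compl s _).symm
  have hl1 := mul_le_mul_of_nonneg_left (sum_abs_sub_sum_abs_le hu v) hlam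
  rw [hsplit] at hcross
  nlinarith [le_abs_self ((v - u) ⬝ᵥ (ghat - Ghat *ᵥ u))]

theorem restricted_eigenvalue_bound [DecidableEq n] {G Ghat : Matrix n n ℝ} {c δ : ℝ}
    {s : Finset n} {x : n → ℝ} (hG : ∀ y, 2 * c * ∑ i, y i ^ 2 ≤ y ⬝ᵥ (G *ᵥ y))
    (hGd : ∀ i k, |Ghat i k - G i k| ≤ δ) (hδ : 0 ≤ δ) (hs : #s * δ ≤ c / 16)
    (hx : ∑ i ∈ sᶜ, |x i| ≤ 3 * ∑ i ∈ s, |x i|) :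
    c * ∑ i, x i ^ 2 ≤ x ⬝ᵥ (Ghat *ᵥ x) := by
  have hdecomp : x ⬝ᵥ (Ghat *ᵥ x) = x ⬝ᵥ (G *ᵥ x) + x ⬝ᵥ ((Ghat - G) *ᵥ x) := by
    rw [sub_mulVec, dotProduct_sub]; ring
  have hpert := abs_dotProduct_mulVec_le (A := Ghat - G) hGd x
  have hl1 : (∑ i, |x i|) ^ 2 ≤ 16 * #s * ∑ i, x i ^ 2 := by
    calc (∑ i, |x i|) ^ 2 ≤ (4 * (√(#s : ℝ) * √(∑ i, x i ^ 2))) ^ 2 :=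
          pow_le_pow_left₀ (sum_nonneg fun i _ => abs_nonneg _) (sum_abs_le_of_cone hx) 2
      _ = 16 * #s * ∑ i, x i ^ 2 := by
          rw [mul_pow, mul_pow, Real.sq_sqrt (Nat.cast_nonneg _),
            Real.sq_sqrt (sum_nonneg fun i _ => sq_nonneg _)]
          ring
  have hT : 0 ≤ ∑ i, x i ^ 2 := sum_nonneg fun i _ => sq_nonneg _
  nlinarith [neg_abs_le (x ⬝ᵥ ((Ghat - G) *ᵥ x)), hG x, mul_le_mul_of_nonneg_left hl1 hδ,
    mul_le_mul_of_nonneg_right hs hT]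

theorem abs_sub_mulVec_le_of_perturbation {G Ghat : Matrix n n ℝ} {g ghat u : n → ℝ} {δ : ℝ}
    (hGd : ∀ i k, |Ghat i k - G i k| ≤ δ) (hgd : ∀ i, |ghat i - g i| ≤ δ) (hGu : G *ᵥ u = g)
    (i : n) : |ghat i - (Ghat *ᵥ u) i| ≤ (∑ k, |u k| + 1) * δ := by
  have hdecomp : ghat i - (Ghat *ᵥ u) i = (ghat i - g i) - ((Ghat - G) *ᵥ u) i := by
    rw [sub_mulVec, hGu, Pi.sub_apply]; ring
  rw [hdecomp]
  linarith [abs_sub (ghat i - g i) (((Ghat - G) *ᵥ u) i), hgd i,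
    abs_mulVec_apply_le (A := Ghat - G) hGd u i]

theorem abs_mulVec_sub_le {G Ghat : Matrix n n ℝ} {ghat u v : n → ℝ} {δ : ℝ}
    (hGd : ∀ i k, |Ghat i k - G i k| ≤ δ) (i : n) :
    |(G *ᵥ (v - u)) i| ≤
      (∑ k, |(v - u) k|) * δ + |(Ghat *ᵥ v) i - ghat i| + |ghat i - (Ghat *ᵥ u) i| := by
  have hdecomp : (G *ᵥ (v - u)) i =
      -((Ghat - G) *ᵥ (v - u)) i + ((Ghat *ᵥ v) i - ghat i) + (ghat i - (Ghat *ᵥ u) i) := by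
    simp only [sub_mulVec, mulVec_sub, Pi.sub_apply]; ring
  rw [hdecomp]
  linarith [abs_add_three (-((Ghat - G) *ᵥ (v - u)) i) ((Ghat *ᵥ v) i - ghat i)
    (ghat i - (Ghat *ᵥ u) i), abs_neg (((Ghat - G) *ᵥ (v - u)) i),
    abs_mulVec_apply_le (A := Ghat - G) hGd (v - u) i]

theorem lasso_column_error_bounds [DecidableEq n] {G Ghat : Matrix n n ℝ} {g ghat u v : n → ℝ}
    {S : Finset n} {c δ lam s : ℝ} (hc : 0 < c) (hδ : 0 < δ)
    (hG : ∀ x, 2 * c * ∑ i, x i ^ 2 ≤ x ⬝ᵥ (G *ᵥ x)) (hGhat : Ghat.PosSemidef)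
    (hGd : ∀ i k, |Ghat i k - G i k| ≤ δ) (hgd : ∀ i, |ghat i - g i| ≤ δ) (hGu : G *ᵥ u = g)
    (hu : ∀ i ∉ S, u i = 0) (hS : (#S : ℝ) ≤ s) (hs : s * δ ≤ c / 16)
    (hlam : 4 * (∑ i, |u i| + 1) * δ ≤ lam)
    (hv : ∀ w, lassoObjective Ghat ghat lam v ≤ lassoObjective Ghat ghat lam w) :
    √(∑ i, (v i - u i) ^ 2) ≤ 3 / 2 * √s * lam / c ∧
      ∑ i, |v i - u i| ≤ 6 * s * lam / c ∧
      ∀ i, |(G *ᵥ (v - u)) i| ≤ 2 * lam := by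
  have hlam0 : 0 < lam := lt_of_lt_of_le (by positivity) hlam
  have hs0 : 0 ≤ s := (Nat.cast_nonneg _).trans hS
  have hGhat_symm : Ghat.IsSymm := isHermitian_iff_isSymm.1 hGhat.isHermitian
  have hnoise (i : n) : |ghat i - (Ghat *ᵥ u) i| ≤ lam / 4 := by
    linarith [abs_sub_mulVec_le_of_perturbation hGd hgd hGu i]
  have hbasic := lasso_basic_inequality hGhat_symm hlam0.le hnoise hu (hv u)
  set x := v - u
  set T := ∑ i, x i ^ 2
  have hT : 0 ≤ T := sum_nonneg fun i _ => sq_nonneg _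
  have hQ : 0 ≤ x ⬝ᵥ (Ghat *ᵥ x) := by
    simpa only [star_trivial] using hGhat.dotProduct_mulVec_nonneg x
  have hcone : ∑ i ∈ Sᶜ, |x i| ≤ 3 * ∑ i ∈ S, |x i| := by
    linarith [(mul_nonneg_iff_of_pos_left hlam0).1 (hQ.trans hbasic)]
  have hre := restricted_eigenvalue_bound hG hGd hδ.le
    ((mul_le_mul_of_nonneg_right hS hδ.le).trans hs) hcone
  have hsqrt : √(#S : ℝ) ≤ √s := Real.sqrt_le_sqrt hS
  have hsupp : ∑ i ∈ S, |x i| ≤ √s * √T :=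
    (sum_abs_le_sqrt_card_mul_sqrt_sum_sq S x).trans (by gcongr)
  have hl2 : √T ≤ 3 / 2 * √s * lam / c :=
    sqrt_le_div_of_mul_le_mul_sqrt hc (by positivity) hT <| by
      nlinarith [sum_nonneg fun i (_ : i ∈ Sᶜ) => abs_nonneg (x i)]
  have hl1 : ∑ i, |x i| ≤ 6 * s * lam / c :=
    calc ∑ i, |x i| ≤ 4 * (√(#S : ℝ) * √T) := sum_abs_le_of_cone hcone
      _ ≤ 4 * (√s * (3 / 2 * √s * lam / c)) := by gcongr
      _ = 6 * s * lam / c := by linear_combination 6 * lam / c * Real.mul_self_sqrt hs0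
  refine ⟨hl2, hl1, fun i => ?_⟩
  have hperturb : (∑ k, |x k|) * δ ≤ 3 / 8 * lam :=
    calc (∑ k, |x k|) * δ ≤ 6 * s * lam / c * δ := mul_le_mul_of_nonneg_right hl1 hδ.le
      _ = 6 * lam / c * (s * δ) := by ring
      _ ≤ 6 * lam / c * (c / 16) := by gcongr
      _ = 3 / 8 * lam := by field_simp; ring
  have hkkt := two_mul_abs_mulVec_sub_le_of_isMin hGhat_symm hlam0.le hv i
  linarith [abs_mulVec_sub_le (ghat := ghat) (u := u) (v := v) hGd i, hnoise i]

end Lasso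

section Columns

variable {m n : Type*} [Fintype m] [Fintype n]

noncomputable def lassoMatrixObjective (Ghat : Matrix m m ℝ) (ghat : Matrix m n ℝ) (lam : ℝ)
    (M : Matrix m n ℝ) : ℝ :=
  trace (Mᵀ * Ghat * M) - 2 * trace (Mᵀ * ghat) + lam * ∑ i, ∑ j, |M i j|

theorem lassoMatrixObjective_eq_sum (Ghat : Matrix m m ℝ) (ghat : Matrix m n ℝ) (lam : ℝ)
    (M : Matrix m n ℝ) :
    lassoMatrixObjective Ghat ghat lam M = ∑ j, lassoObjective Ghat (ghatᵀ j) lam (Mᵀ j) := by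
  have hquad : trace (Mᵀ * Ghat * M) = ∑ j, Mᵀ j ⬝ᵥ (Ghat *ᵥ Mᵀ j) :=
    sum_congr rfl fun j _ => (dotProduct_mulVec (Mᵀ j) Ghat (Mᵀ j)).symm
  have hlin : trace (Mᵀ * ghat) = ∑ j, Mᵀ j ⬝ᵥ ghatᵀ j := rfl
  rw [lassoMatrixObjective, hquad, hlin, sum_comm (f := fun i j => |M i j|)]
  simp only [lassoObjective, sum_add_distrib, sum_sub_distrib, mul_sum, transpose_apply]

theorem lassoObjective_col_le_of_isMin [DecidableEq n] {Ghat : Matrix m m ℝ}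
    {ghat B : Matrix m n ℝ} {lam : ℝ}
    (hB : ∀ M, lassoMatrixObjective Ghat ghat lam B ≤ lassoMatrixObjective Ghat ghat lam M)
    (j : n) (w : m → ℝ) :
    lassoObjective Ghat (ghatᵀ j) lam (Bᵀ j) ≤ lassoObjective Ghat (ghatᵀ j) lam w := by
  have h := hB (updateCol B j w)
  rw [lassoMatrixObjective_eq_sum, lassoMatrixObjective_eq_sum, ← sub_nonneg,
    ← sum_sub_distrib, sum_eq_single j] at h
  · simpa only [← updateRow_transpose, updateRow_self, sub_nonneg] using h
  · intro k _ hk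
    rw [← updateRow_transpose, updateRow_ne hk, sub_self]
  · exact fun h => absurd (mem_univ j) h

end Columns

theorem sum_abs_le_colOneNorm {a b : ℕ} (M : Matrix (Fin a) (Fin b) ℝ) (j : Fin b) :
    ∑ i, |M i j| ≤ colOneNorm M :=
  le_ciSup (f := fun j => ∑ i, |M i j|) (Set.finite_range _).bddAbove j

theorem colOneNorm_nonneg {a b : ℕ} (M : Matrix (Fin a) (Fin b) ℝ) : 0 ≤ colOneNorm M :=
  Real.iSup_nonneg fun _ => sum_nonneg fun _ _ => abs_nonneg _

theorem abs_apply_le_colOneNorm_inv_mul {a : ℕ} {G : Matrix (Fin a) (Fin a) ℝ} (hG : G.IsSymm)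
    (hdet : IsUnit G.det) {x : Fin a → ℝ} {r : ℝ} (hx : ∀ k, |(G *ᵥ x) k| ≤ r) (i : Fin a) :
    |x i| ≤ colOneNorm G⁻¹ * r := by
  have hx_eq : x i = G⁻¹ i ⬝ᵥ (G *ᵥ x) := by
    rw [← mulVec, mulVec_mulVec, nonsing_inv_mul _ hdet, one_mulVec]
  have hr : 0 ≤ r := (abs_nonneg _).trans (hx i)
  calc |x i| ≤ (∑ k, |G⁻¹ i k|) * r := hx_eq ▸ abs_dotProduct_le_of_abs_le hx
    _ = (∑ k, |G⁻¹ k i|) * r := by simp only [hG.inv.apply]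
    _ ≤ colOneNorm G⁻¹ * r := by gcongr; exact sum_abs_le_colOneNorm G⁻¹ i

theorem card_filter_ne_zero_le_maxColSupport {a b : ℕ} (β : Matrix (Fin a) (Fin b) ℝ)
    (j : Fin b) : (#{i | β i j ≠ 0} : ℝ) ≤ maxColSupport β :=
  Nat.cast_le.2 (le_sup (f := fun j => #{i | β i j ≠ 0}) (mem_univ j))

theorem stmt8 (p d : ℕ) (mxi δ lam : ℝ) (hmxi : 0 < mxi) (hδ : 0 < δ)
    (G : Matrix (Fin (p * d)) (Fin (p * d)) ℝ) (hG : G.IsHermitian)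
    (heig : ∀ i, 2 * Real.pi * mxi ≤ hG.eigenvalues i)
    (g β : Matrix (Fin (p * d)) (Fin p) ℝ) (hβ : β = G⁻¹ * g)
    (Ghat : Matrix (Fin (p * d)) (Fin (p * d)) ℝ) (hGhat : Ghat.PosSemidef)
    (ghat : Matrix (Fin (p * d)) (Fin p) ℝ)
    (hGd : ∀ i j, |Ghat i j - G i j| ≤ δ) (hgd : ∀ i j, |ghat i j - g i j| ≤ δ)
    (hsin : (maxColSupport β : ℝ) * δ ≤ Real.pi * mxi / 16)
    (hlam : 4 * (colOneNorm β + 1) * δ ≤ lam)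
    (βhat : Matrix (Fin (p * d)) (Fin p) ℝ)
    (hmin : ∀ M : Matrix (Fin (p * d)) (Fin p) ℝ,
      Matrix.trace (βhatᵀ * Ghat * βhat) - 2 * Matrix.trace (βhatᵀ * ghat) +
          lam * ∑ i, ∑ j, |βhat i j| ≤
        Matrix.trace (Mᵀ * Ghat * M) - 2 * Matrix.trace (Mᵀ * ghat) +
          lam * ∑ i, ∑ j, |M i j|) :
    (∀ j, Real.sqrt (∑ i, (βhat i j - β i j) ^ 2) ≤
        6 * Real.sqrt (maxColSupport β) * lam / (Real.pi * mxi)) ∧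
    (∀ j, (∑ i, |βhat i j - β i j|) ≤
        24 * (maxColSupport β : ℝ) * lam / (Real.pi * mxi)) ∧
    (∀ i j, |βhat i j - β i j| ≤
        min (4 * colOneNorm G⁻¹ * lam)
          (6 * Real.sqrt (maxColSupport β) * lam / (Real.pi * mxi))) := by
  set s : ℝ := (maxColSupport β : ℝ)
  have hc : 0 < Real.pi * mxi := by positivity
  have hlam0 : 0 < lam := lt_of_lt_of_le (by have := colOneNorm_nonneg β; positivity) hlam
  have hquad (x : Fin (p * d) → ℝ) : 2 * (Real.pi * mxi) * ∑ i, x i ^ 2 ≤ x ⬝ᵥ (G *ᵥ x) := by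
    simpa only [mul_assoc] using hG.mul_sum_sq_le_dotProduct_mulVec heig x
  have hdet : IsUnit G.det :=
    (hG.posDef_iff_eigenvalues_pos.2 fun i => by nlinarith [heig i]).det_pos.ne'.isUnit
  have hGβ : G * β = g := by rw [hβ, mul_nonsing_inv_cancel_left _ _ hdet]
  have hcol (j : Fin p) := lasso_column_error_bounds (u := βᵀ j) (S := {i | β i j ≠ 0})
    hc hδ hquad hGhat hGd (fun i => hgd i j) (funext fun i => congrFun (congrFun hGβ i) j)
    (fun i hi => by simpa using hi)
    (card_filter_ne_zero_le_maxColSupport β j) hsin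
    (hlam.trans' (by gcongr; exact sum_abs_le_colOneNorm β j))
    (lassoObjective_col_le_of_isMin hmin j)
  have hl2 (j : Fin p) : √(∑ i, (βhat i j - β i j) ^ 2) ≤ 6 * √s * lam / (Real.pi * mxi) :=
    (hcol j).1.trans (by gcongr; norm_num)
  refine ⟨hl2, fun j => (hcol j).2.1.trans (by gcongr; norm_num), fun i j => le_min ?_ ?_⟩
  · calc |βhat i j - β i j| ≤ colOneNorm G⁻¹ * (2 * lam) :=
          abs_apply_le_colOneNorm_inv_mul (isHermitian_iff_isSymm.1 hG) hdet (hcol j).2.2 i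
      _ ≤ 4 * colOneNorm G⁻¹ * lam := by nlinarith [colOneNorm_nonneg G⁻¹]
  · exact (abs_apply_le_sqrt_sum_sq (βhatᵀ j - βᵀ j) i).trans (hl2 j)
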